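/- Let {t_b}_{b∈L} be a solution of problem (B). If t_max > ∑_{b∈L} r_b, then t_b ≥ r_b for all b ∈ L. -/

import Mathlib

/-- `betaP p t r = ∑_{i=0}^{r-1} C(t,i) (1-p)^i p^(t-i)`. -/
noncomputable def betaP (p : ℝ) (t r : ℕ) : ℝ :=
  ∑ i ∈ Finset.range r, (t.choose i : ℝ) * (1 - p) ^ i * p ^ (t - i)

/-- Expected rank function `E(r,t) = ∑_{i=0}^{t} C(t,i) (1-p)^i p^(t-i) * min{i,r}`. -/
noncomputable def expRank (p : ℝ) (r t : ℕ) : ℝ :=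
  ∑ i ∈ Finset.range (t + 1),
    (t.choose i : ℝ) * (1 - p) ^ i * p ^ (t - i) * ((min i r : ℕ) : ℝ)

/-!
Adding one transmission to block `b` raises `E(r_b, ·)` by `(1 - p)` times the probability
that the previous `t_b` transmissions delivered fewer than `r_b` packets. This marginal gain is
exactly `1 - p` while `t_b < r_b`, and strictly smaller once `t_b ≥ r_b`, since then the event
"all `t_b` packets arrived" is lost. If some block had `t_b < r_b`, the budget bound forces
another block with `t_{b'} > r_{b'}`, and moving one transmission from `b'` to `b` would strictly
increase the objective.
-/

open Finset Function

section Exchange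

variable {ι α : Type*} [DecidableEq ι]

theorem Finset.sum_apply_update_add {M : Type*} [AddCommMonoid M] (G : ι → α → M) (u : ι → α)
    {L : Finset ι} {i : ι} (hi : i ∈ L) (v : α) :
    ∑ b ∈ L, G b (update u i v b) + G i (u i) = ∑ b ∈ L, G b (u b) + G i v := by
  simp only [apply_update G, sum_update_of_mem hi, sdiff_singleton_eq_erase,
    ← add_sum_erase L (fun b => G b (u b)) hi]
  abel

theorem marginal_gain_le_marginal_loss {F : ι → ℕ → ℝ} {L : Finset ι} {t : ι → ℕ}
    (hopt : ∀ t' : ι → ℕ, ∑ b ∈ L, t' b = ∑ b ∈ L, t b →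
      ∑ b ∈ L, F b (t' b) ≤ ∑ b ∈ L, F b (t b))
    {i j : ι} (hi : i ∈ L) (hj : j ∈ L) (hij : i ≠ j) {s : ℕ} (hs : t j = s + 1) :
    F i (t i + 1) - F i (t i) ≤ F j (s + 1) - F j s := by
  have hui : update t j s i = t i := update_of_ne hij _ _
  have hcard₁ := sum_apply_update_add (fun _ n => n) t hj s
  have hcard₂ := sum_apply_update_add (fun _ n => n) (update t j s) hi (t i + 1)
  have hval₁ := sum_apply_update_add F t hj s
  have hval₂ := sum_apply_update_add F (update t j s) hi (t i + 1)
  simp only [hui, hs] at hcard₁ hcard₂ hval₁ hval₂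
  have := hopt (update (update t j s) i (t i + 1)) (by omega)
  linarith

end Exchange

section BinomWeight

/-- `binomWeight p t i` is the probability that exactly `i` of `t` packets arrive. -/
noncomputable def binomWeight (p : ℝ) (t i : ℕ) : ℝ :=
  (t.choose i : ℝ) * (1 - p) ^ i * p ^ (t - i)

variable {p : ℝ}

theorem sum_binomWeight (p : ℝ) (t : ℕ) : ∑ i ∈ range (t + 1), binomWeight p t i = 1 := by
  have h := add_pow (1 - p) p t
  rw [sub_add_cancel, one_pow] at h
  rw [h]
  exact sum_congr rfl fun i _ => by unfold binomWeight; ring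

theorem binomWeight_nonneg (hp0 : 0 ≤ p) (hp1 : p ≤ 1) (t i : ℕ) : 0 ≤ binomWeight p t i := by
  have : 0 ≤ 1 - p := by linarith
  unfold binomWeight
  positivity

theorem binomWeight_self_pos (hp1 : p < 1) (t : ℕ) : 0 < binomWeight p t t := by
  have : 0 < 1 - p := by linarith
  simp only [binomWeight, Nat.choose_self, Nat.cast_one, one_mul, Nat.sub_self, pow_zero, mul_one]
  positivity

/-- The `(t+1)`-st packet arrives with probability `1 - p` independently of the first `t`. -/
theorem sum_binomWeight_succ_mul (p : ℝ) (g : ℕ → ℝ) (t : ℕ) :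
    ∑ i ∈ range (t + 2), binomWeight p (t + 1) i * g i =
      ∑ i ∈ range (t + 1), binomWeight p t i * (p * g i + (1 - p) * g (i + 1)) := by
  have h := sum_choose_succ_mul (fun i j => (1 - p) ^ i * p ^ j * g i) t
  simp only [← mul_assoc] at h
  simp only [binomWeight]
  rw [h, ← sum_add_distrib]
  refine sum_congr rfl fun i hi => ?_
  rw [show t + 1 - i = t - i + 1 by grind]
  ring

theorem expRank_eq_sum_binomWeight (p : ℝ) (r t : ℕ) :
    expRank p r t = ∑ i ∈ range (t + 1), binomWeight p t i * ((min i r : ℕ) : ℝ) := rfl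

theorem expRank_succ (p : ℝ) (r t : ℕ) :
    expRank p r (t + 1) =
      expRank p r t + (1 - p) * ∑ i ∈ range (t + 1) with i < r, binomWeight p t i := by
  have hmin (i : ℕ) : ((min (i + 1) r : ℕ) : ℝ) = (min i r : ℕ) + if i < r then 1 else 0 := by
    split_ifs <;> norm_cast <;> omega
  rw [expRank_eq_sum_binomWeight, sum_binomWeight_succ_mul, expRank_eq_sum_binomWeight,
    sum_filter, mul_sum, ← sum_add_distrib]
  refine sum_congr rfl fun i _ => ?_
  rw [hmin]
  split_ifs <;> ring

theorem expRank_succ_of_lt (p : ℝ) {r t : ℕ} (h : t < r) :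
    expRank p r (t + 1) = expRank p r t + (1 - p) := by
  rw [expRank_succ, filter_true_of_mem fun i hi => by grind, sum_binomWeight, mul_one]

theorem expRank_succ_lt_of_le (hp0 : 0 < p) (hp1 : p < 1) {r t : ℕ} (h : r ≤ t) :
    expRank p r (t + 1) < expRank p r t + (1 - p) := by
  have hlt : ∑ i ∈ range (t + 1) with i < r, binomWeight p t i < 1 := by
    rw [← sum_binomWeight p t]
    refine sum_lt_sum_of_subset (filter_subset _ _) (i := t) (by simp) (by simp; omega)
      (binomWeight_self_pos hp1 t) fun i _ _ => binomWeight_nonneg hp0.le hp1.le t i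
  rw [expRank_succ]
  nlinarith

end BinomWeight

theorem stmt13 {ι : Type*} (p : ℝ) (hp0 : 0 < p) (hp1 : p < 1)
    (L : Finset ι) (r : ι → ℕ) (tmax : ℕ)
    (t : ι → ℕ) (hfeas : (∑ b ∈ L, t b) = tmax)
    (hopt : ∀ t' : ι → ℕ, (∑ b ∈ L, t' b) = tmax →
      ∑ b ∈ L, expRank p (r b) (t' b) ≤ ∑ b ∈ L, expRank p (r b) (t b))
    (hgt : (∑ b ∈ L, r b) < tmax) :
    ∀ b ∈ L, r b ≤ t b := by
  classical
  by_contra! ⟨i, hi, hti⟩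
  obtain ⟨j, hj, htj⟩ := exists_lt_of_sum_lt (hfeas ▸ hgt)
  obtain ⟨s, hs⟩ : ∃ s, t j = s + 1 := ⟨t j - 1, by omega⟩
  have hij : i ≠ j := by rintro rfl; omega
  have hmarginal := marginal_gain_le_marginal_loss (F := fun b => expRank p (r b))
    (fun t' ht' => hopt t' (ht'.trans hfeas)) hi hj hij hs
  have hgain := expRank_succ_of_lt p hti
  have hloss := expRank_succ_lt_of_le hp0 hp1 (show r j ≤ s by omega)
  linarith
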